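/- Let ℤ₃ denote the ring of 3-adic integers, set Δ = x³ − 27y² in ℤ₃[x, y], and let S be the ℤ₃-subalgebra of ℤ₃[x, y] generated by the nine elements 3x, 27y, 3Δ, 3Δ², 3xΔ, 3xΔ², 27yΔ, 27yΔ², Δ³. Then S is free as a ℤ₃-module with basis { (3x)^i (27y)^j Δ^k : 0 ≤ i ≤ 2, j ≥ 0, k ≥ 0, and (k ≡ 0 mod 3 or i + j > 0) } ∪ { 3Δ^k : k ≥ 1, k ≢ 0 mod 3 }. -/

import Mathlib

open MvPolynomial

/-- The polynomial ring `ℤ₃[x, y]` over the 3-adic integers. -/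
abbrev PolyZ3 : Type := MvPolynomial (Fin 2) ℤ_[3]

/-- The variable `x` (corresponding to `c₄/3`). -/
noncomputable def xP : PolyZ3 := X 0

/-- The variable `y` (corresponding to `c₆/27`). -/
noncomputable def yP : PolyZ3 := X 1

/-- The discriminant `Δ = x³ − 27y²`. -/
noncomputable def deltaP : PolyZ3 := xP ^ 3 - 27 * yP ^ 2

/-- The `ℤ₃`-subalgebra of `ℤ₃[x, y]` generated by the nine elements
`3x, 27y, 3Δ, 3Δ², 3xΔ, 3xΔ², 27yΔ, 27yΔ², Δ³`
(the image of the Adams–Novikov filtration-zero subring of `tmf₋`). -/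
noncomputable def S3 : Subalgebra ℤ_[3] PolyZ3 :=
  Algebra.adjoin ℤ_[3]
    {3 * xP, 27 * yP, 3 * deltaP, 3 * deltaP ^ 2, 3 * xP * deltaP, 3 * xP * deltaP ^ 2,
      27 * yP * deltaP, 27 * yP * deltaP ^ 2, deltaP ^ 3}

/-- Index type for the claimed basis of `S`: triples `(i, j, k)` with `0 ≤ i ≤ 2`,
`j, k ≥ 0` and (`k ≡ 0 mod 3` or `i + j > 0`), together with naturals `k ≥ 1` with
`k ≢ 0 mod 3`. -/
def BasisIndex : Type :=
  {p : Fin 3 × ℕ × ℕ // p.2.2 % 3 = 0 ∨ 0 < (p.1 : ℕ) + p.2.1} ⊕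
    {k : ℕ // 1 ≤ k ∧ k % 3 ≠ 0}

/-- The claimed basis family: `(3x)^i (27y)^j Δ^k` on the first summand and
`3Δ^k` on the second. -/
noncomputable def basisFamily : BasisIndex → PolyZ3
  | .inl p => (3 * xP) ^ (p.1.1 : ℕ) * (27 * yP) ^ p.1.2.1 * deltaP ^ p.1.2.2
  | .inr k => 3 * deltaP ^ (k : ℕ)

/-! Order monomials lexicographically with `x > y`. The leading monomial of `(3x)^i (27y)^j Δ^k`
is `x^(i+3k) y^j`, and these exponents are pairwise distinct on the claimed basis, so the family is
linearly independent over the domain `ℤ₃`.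

Each basis element is a product of generators: write `Δ^k = Δ^r (Δ³)^q` with `r < 3` and absorb
`Δ^r` into `3xΔ^r`, `27yΔ^r` or `3Δ^r`. Conversely the span contains `1` and is closed under
multiplication, hence is a subalgebra containing the generators. Closure under multiplication
comes down to the relation `(3x)³ = 27Δ + (27y)²`, which pushes the exponent of `3x` below `3`
at the cost of either a factor `27` or a positive power of `27y`. -/

namespace MonomialOrder

variable {σ R ι : Type*} [CommRing R] [NoZeroDivisors R] (m : MonomialOrder σ)

theorem linearIndependent_of_injective_degree {f : ι → MvPolynomial σ R} (hf : ∀ i, f i ≠ 0)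
    (hdeg : Function.Injective (m.degree ∘ f)) : LinearIndependent R f := by
  classical
  rw [linearIndependent_iff]
  intro l hl
  by_contra hne
  obtain ⟨i, hi, hmax⟩ := l.support.exists_max_image (fun i => m.toSyn (m.degree (f i)))
    (Finsupp.support_nonempty_iff.mpr hne)
  have hlt : ∀ j ∈ l.support, j ≠ i → m.degree (f i) ∉ (f j).support := fun j hj hji =>
    m.notMem_support_of_degree_lt <|
      lt_of_le_of_ne (hmax j hj) fun h => hji (hdeg (m.toSyn.injective h))
  have hcoeff := congrArg (coeff (m.degree (f i))) hl
  rw [Finsupp.linearCombination_apply, Finsupp.sum, coeff_sum,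
    Finset.sum_eq_single i (fun j hj hji => by simp [notMem_support_iff.mp (hlt j hj hji)])
      (fun h => absurd hi h), coeff_smul, smul_eq_mul, coeff_zero] at hcoeff
  exact mul_ne_zero (Finsupp.mem_support_iff.mp hi) (m.coeff_degree_ne_zero_iff.mpr (hf i)) hcoeff

end MonomialOrder

lemma Submodule.mul_mem_span_of_mul_mem_span {R A : Type*} [CommSemiring R] [Semiring A]
    [Algebra R A] {s : Set A} (hs : ∀ a ∈ s, ∀ b ∈ s, a * b ∈ span R s) {x y : A}
    (hx : x ∈ span R s) (hy : y ∈ span R s) : x * y ∈ span R s := by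
  refine Submodule.mul_le.mp ?_ x hx y hy
  rw [span_mul_span, span_le]
  rintro _ ⟨a, ha, b, hb, rfl⟩
  exact hs a ha b hb

lemma natCast_mul_mem {A S : Type*} [NonAssocSemiring A] [SetLike S A] [AddSubmonoidClass S A]
    {s : S} {x : A} (hx : x ∈ s) (n : ℕ) : (n : A) * x ∈ s :=
  nsmul_eq_mul n x ▸ nsmul_mem hx n

open MonomialOrder

noncomputable def scaledMonomial (i j k : ℕ) : PolyZ3 :=
  (3 * xP) ^ i * (27 * yP) ^ j * deltaP ^ k

lemma scaledMonomial_mul (i j k i' j' k' : ℕ) :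
    scaledMonomial i j k * scaledMonomial i' j' k' =
      scaledMonomial (i + i') (j + j') (k + k') := by
  simp only [scaledMonomial, pow_add]
  ring

lemma scaledMonomial_add_three (i j k : ℕ) :
    scaledMonomial (i + 3) j k =
      27 * scaledMonomial i j (k + 1) + scaledMonomial i (j + 2) k := by
  simp only [scaledMonomial, deltaP, pow_add]
  ring

lemma basisFamily_inl (p) : basisFamily (.inl p) = scaledMonomial p.1.1 p.1.2.1 p.1.2.2 := rfl

lemma basisFamily_inr (k) : basisFamily (.inr k) = 3 * scaledMonomial 0 0 k := by
  simp [basisFamily, scaledMonomial]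

section LinearIndependence

lemma degree_three_mul_xP : lex.degree (3 * xP) = Finsupp.single 0 1 := by
  rw [xP, ← map_ofNat C, degree_mul (by simp) (X_ne_zero _), degree_C, degree_X, zero_add]

lemma degree_twentySeven_mul_yP : lex.degree (27 * yP) = Finsupp.single 1 1 := by
  rw [yP, ← map_ofNat C, degree_mul (by simp) (X_ne_zero _), degree_C, degree_X, zero_add]

lemma degree_deltaP : lex.degree deltaP = Finsupp.single 0 3 := by
  classical
  have hx : lex.degree (xP ^ 3) = Finsupp.single 0 3 := by
    rw [xP, X_pow_eq_monomial, degree_monomial, if_neg one_ne_zero]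
  have hy : lex.degree (27 * yP ^ 2) = Finsupp.single 1 2 := by
    rw [yP, X_pow_eq_monomial, ← map_ofNat C, C_mul_monomial, degree_monomial,
      if_neg (by norm_num)]
  have hlt : lex.degree (-(27 * yP ^ 2)) ≺[lex] lex.degree (xP ^ 3) := by
    rw [degree_neg, hx, hy, lex_lt_iff]
    exact ⟨0, by simp⟩
  rw [deltaP, sub_eq_add_neg, degree_add_of_lt hlt, hx]

lemma three_mul_xP_ne_zero : 3 * xP ≠ 0 :=
  ne_zero_of_degree_ne_zero (m := lex) (by simp [degree_three_mul_xP])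

lemma twentySeven_mul_yP_ne_zero : 27 * yP ≠ 0 :=
  ne_zero_of_degree_ne_zero (m := lex) (by simp [degree_twentySeven_mul_yP])

lemma deltaP_ne_zero : deltaP ≠ 0 :=
  ne_zero_of_degree_ne_zero (m := lex) (by simp [degree_deltaP])

lemma scaledMonomial_ne_zero (i j k : ℕ) : scaledMonomial i j k ≠ 0 :=
  mul_ne_zero (mul_ne_zero (pow_ne_zero _ three_mul_xP_ne_zero)
    (pow_ne_zero _ twentySeven_mul_yP_ne_zero)) (pow_ne_zero _ deltaP_ne_zero)

lemma degree_scaledMonomial (i j k : ℕ) :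
    lex.degree (scaledMonomial i j k) = Finsupp.single 0 (i + 3 * k) + Finsupp.single 1 j := by
  rw [scaledMonomial, degree_mul (left_ne_zero_of_mul (scaledMonomial_ne_zero i j k))
    (pow_ne_zero _ deltaP_ne_zero), degree_mul (pow_ne_zero _ three_mul_xP_ne_zero)
    (pow_ne_zero _ twentySeven_mul_yP_ne_zero), degree_pow, degree_pow, degree_pow,
    degree_three_mul_xP, degree_twentySeven_mul_yP, degree_deltaP]
  ext n
  fin_cases n <;> simp [mul_comm]

lemma basisFamily_ne_zero (e : BasisIndex) : basisFamily e ≠ 0 := by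
  rcases e with _ | _
  · exact scaledMonomial_ne_zero _ _ _
  · rw [basisFamily_inr, ← map_ofNat C]
    exact mul_ne_zero (by simp) (scaledMonomial_ne_zero _ _ _)

lemma degree_basisFamily_inr (k) :
    lex.degree (basisFamily (.inr k)) = Finsupp.single 0 (3 * (k : ℕ)) := by
  rw [basisFamily_inr, ← map_ofNat C, degree_mul (by simp) (scaledMonomial_ne_zero _ _ _),
    degree_C, degree_scaledMonomial]
  simp

lemma injective_degree_basisFamily : Function.Injective (lex.degree ∘ basisFamily) := by
  intro e e' h
  replace h : lex.degree (basisFamily e) = lex.degree (basisFamily e') := h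
  have h0 := DFunLike.congr_fun h 0
  have h1 := DFunLike.congr_fun h 1
  rcases e with ⟨⟨i, j, k⟩, hp⟩ | ⟨k, _⟩ <;> rcases e' with ⟨⟨i', j', k'⟩, hp'⟩ | ⟨k', _⟩ <;>
    simp [basisFamily_inl, degree_scaledMonomial, degree_basisFamily_inr] at h0 h1
  · obtain rfl : i = i' := Fin.ext (by omega)
    obtain rfl : k = k' := by omega
    subst h1
    rfl
  · simp at hp; omega
  · simp at hp'; omega
  · obtain rfl : k = k' := by omega
    rfl

theorem linearIndependent_basisFamily : LinearIndependent ℤ_[3] basisFamily :=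
  lex.linearIndependent_of_injective_degree basisFamily_ne_zero injective_degree_basisFamily

end LinearIndependence

section SpanContainsS3

noncomputable abbrev basisSpan : Submodule ℤ_[3] PolyZ3 :=
  Submodule.span ℤ_[3] (Set.range basisFamily)

variable {i j k : ℕ}

lemma scaledMonomial_mem_basisSpan_of_lt_three (hi : i < 3) (h : k % 3 = 0 ∨ 0 < i + j) :
    scaledMonomial i j k ∈ basisSpan :=
  Submodule.subset_span ⟨.inl ⟨(⟨i, hi⟩, j, k), h⟩, rfl⟩

lemma three_mul_scaledMonomial_mem_basisSpan (i j k : ℕ) :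
    3 * scaledMonomial i j k ∈ basisSpan := by
  induction i using Nat.strong_induction_on generalizing j k with
  | _ i ih =>
  rcases lt_or_ge i 3 with hi | hi
  · by_cases h : k % 3 = 0 ∨ 0 < i + j
    · exact_mod_cast natCast_mul_mem (scaledMonomial_mem_basisSpan_of_lt_three hi h) 3
    · obtain ⟨rfl, rfl⟩ : i = 0 ∧ j = 0 := by omega
      exact Submodule.subset_span ⟨.inr ⟨k, by omega, by omega⟩, basisFamily_inr _⟩
  · obtain ⟨i, rfl⟩ := Nat.exists_eq_add_of_le' hi
    rw [scaledMonomial_add_three, mul_add, mul_left_comm]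
    exact add_mem (mod_cast natCast_mul_mem (ih i (by omega) j (k + 1)) 27)
      (ih i (by omega) _ _)

lemma scaledMonomial_mem_basisSpan (h : k % 3 = 0 ∨ 0 < i + j) :
    scaledMonomial i j k ∈ basisSpan := by
  induction i using Nat.strong_induction_on generalizing j k with
  | _ i ih =>
  rcases lt_or_ge i 3 with hi | hi
  · exact scaledMonomial_mem_basisSpan_of_lt_three hi h
  · obtain ⟨i, rfl⟩ := Nat.exists_eq_add_of_le' hi
    have h27 := natCast_mul_mem (three_mul_scaledMonomial_mem_basisSpan i j (k + 1)) 9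
    rw [← mul_assoc] at h27
    norm_num at h27
    rw [scaledMonomial_add_three]
    exact add_mem h27 (ih i (by omega) (by omega))

lemma basisFamily_mul_mem_basisSpan (e e' : BasisIndex) :
    basisFamily e * basisFamily e' ∈ basisSpan := by
  rcases e with ⟨⟨i, j, k⟩, hp⟩ | k <;> rcases e' with ⟨⟨i', j', k'⟩, hp'⟩ | k'
  · rw [basisFamily_inl, basisFamily_inl, scaledMonomial_mul]
    refine scaledMonomial_mem_basisSpan ?_
    simp only at hp hp' ⊢
    omega
  · rw [basisFamily_inl, basisFamily_inr, mul_left_comm, scaledMonomial_mul]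
    exact three_mul_scaledMonomial_mem_basisSpan _ _ _
  · rw [basisFamily_inr, basisFamily_inl, mul_assoc, scaledMonomial_mul]
    exact three_mul_scaledMonomial_mem_basisSpan _ _ _
  · rw [basisFamily_inr, basisFamily_inr, mul_mul_mul_comm, scaledMonomial_mul, mul_assoc]
    exact_mod_cast natCast_mul_mem (three_mul_scaledMonomial_mem_basisSpan _ _ _) 3

lemma one_mem_basisSpan : 1 ∈ basisSpan := by
  simpa [scaledMonomial] using scaledMonomial_mem_basisSpan (i := 0) (j := 0) (k := 0) (by simp)

noncomputable def basisSubalgebra : Subalgebra ℤ_[3] PolyZ3 :=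
  basisSpan.toSubalgebra one_mem_basisSpan
    fun _ _ hx hy => Submodule.mul_mem_span_of_mul_mem_span
      (by rintro _ ⟨e, rfl⟩ _ ⟨e', rfl⟩; exact basisFamily_mul_mem_basisSpan e e') hx hy

lemma S3_le_basisSubalgebra : S3 ≤ basisSubalgebra := by
  refine Algebra.adjoin_le ?_
  rintro _ (rfl | rfl | rfl | rfl | rfl | rfl | rfl | rfl | rfl) <;>
    simp only [SetLike.mem_coe, basisSubalgebra]
  · simpa [scaledMonomial] using scaledMonomial_mem_basisSpan (i := 1) (j := 0) (k := 0) (by simp)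
  · simpa [scaledMonomial] using scaledMonomial_mem_basisSpan (i := 0) (j := 1) (k := 0) (by simp)
  · simpa [scaledMonomial] using three_mul_scaledMonomial_mem_basisSpan 0 0 1
  · simpa [scaledMonomial] using three_mul_scaledMonomial_mem_basisSpan 0 0 2
  · simpa [scaledMonomial] using scaledMonomial_mem_basisSpan (i := 1) (j := 0) (k := 1) (by simp)
  · simpa [scaledMonomial] using scaledMonomial_mem_basisSpan (i := 1) (j := 0) (k := 2) (by simp)
  · simpa [scaledMonomial] using scaledMonomial_mem_basisSpan (i := 0) (j := 1) (k := 1) (by simp)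
  · simpa [scaledMonomial] using scaledMonomial_mem_basisSpan (i := 0) (j := 1) (k := 2) (by simp)
  · simpa [scaledMonomial] using scaledMonomial_mem_basisSpan (i := 0) (j := 0) (k := 3) (by simp)

end SpanContainsS3

section BasisInS3

lemma mul_deltaP_pow_mem_S3 {g : PolyZ3} (h0 : g ∈ S3) (h1 : g * deltaP ∈ S3)
    (h2 : g * deltaP ^ 2 ∈ S3) (k : ℕ) : g * deltaP ^ k ∈ S3 := by
  have h3 : deltaP ^ 3 ∈ S3 := Algebra.subset_adjoin (by simp)
  obtain ⟨q, r, hr, rfl⟩ : ∃ q r, r < 3 ∧ k = r + 3 * q :=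
    ⟨k / 3, k % 3, Nat.mod_lt _ (by norm_num), (Nat.mod_add_div k 3).symm⟩
  rw [pow_add, pow_mul, ← mul_assoc]
  refine mul_mem ?_ (pow_mem h3 q)
  interval_cases r <;> simpa

lemma three_mul_xP_mul_deltaP_pow_mem_S3 (k : ℕ) : 3 * xP * deltaP ^ k ∈ S3 :=
  mul_deltaP_pow_mem_S3 (Algebra.subset_adjoin (by simp)) (Algebra.subset_adjoin (by simp))
    (Algebra.subset_adjoin (by simp)) k

lemma twentySeven_mul_yP_mul_deltaP_pow_mem_S3 (k : ℕ) : 27 * yP * deltaP ^ k ∈ S3 :=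
  mul_deltaP_pow_mem_S3 (Algebra.subset_adjoin (by simp)) (Algebra.subset_adjoin (by simp))
    (Algebra.subset_adjoin (by simp)) k

lemma three_mul_deltaP_pow_mem_S3 (k : ℕ) : 3 * deltaP ^ k ∈ S3 :=
  mul_deltaP_pow_mem_S3 (natCast_mem S3 3) (Algebra.subset_adjoin (by simp))
    (Algebra.subset_adjoin (by simp)) k

lemma scaledMonomial_mem_S3 {i j k : ℕ} (h : k % 3 = 0 ∨ 0 < i + j) :
    scaledMonomial i j k ∈ S3 := by
  have hx : 3 * xP ∈ S3 := Algebra.subset_adjoin (by simp)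
  have hy : 27 * yP ∈ S3 := Algebra.subset_adjoin (by simp)
  rcases h with hk | hij
  · obtain ⟨q, rfl⟩ : 3 ∣ k := Nat.dvd_of_mod_eq_zero hk
    rw [scaledMonomial, pow_mul]
    exact mul_mem (mul_mem (pow_mem hx i) (pow_mem hy j))
      (pow_mem (Algebra.subset_adjoin (by simp)) q)
  rcases i with _ | i
  · obtain ⟨j, rfl⟩ : ∃ j', j = j' + 1 := ⟨j - 1, by omega⟩
    have : scaledMonomial 0 (j + 1) k = 27 * yP * deltaP ^ k * (27 * yP) ^ j := by
      rw [scaledMonomial]; ring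
    rw [this]
    exact mul_mem (twentySeven_mul_yP_mul_deltaP_pow_mem_S3 k) (pow_mem hy j)
  · have : scaledMonomial (i + 1) j k =
        3 * xP * deltaP ^ k * ((3 * xP) ^ i * (27 * yP) ^ j) := by
      rw [scaledMonomial]; ring
    rw [this]
    exact mul_mem (three_mul_xP_mul_deltaP_pow_mem_S3 k) (mul_mem (pow_mem hx i) (pow_mem hy j))

lemma basisFamily_mem_S3 (e : BasisIndex) : basisFamily e ∈ S3 := by
  rcases e with ⟨_, hp⟩ | k
  · exact scaledMonomial_mem_S3 hp
  · exact three_mul_deltaP_pow_mem_S3 k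

end BasisInS3

/-- the subalgebra `S` of `ℤ₃[x, y]` generated by
`3x, 27y, 3Δ, 3Δ², 3xΔ, 3xΔ², 27yΔ, 27yΔ², Δ³` is free as a `ℤ₃`-module with basis
`{(3x)^i (27y)^j Δ^k : 0 ≤ i ≤ 2, k ≡ 0 mod 3 or i + j > 0} ∪ {3Δ^k : k ≥ 1, k ≢ 0 mod 3}`:
the family is linearly independent and spans exactly `S`. -/
theorem S3_free_with_basis :
    LinearIndependent ℤ_[3] basisFamily ∧
      Submodule.span ℤ_[3] (Set.range basisFamily) = Subalgebra.toSubmodule S3 := by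
  refine ⟨linearIndependent_basisFamily, le_antisymm ?_ fun _ hx => S3_le_basisSubalgebra hx⟩
  exact Submodule.span_le.mpr (Set.range_subset_iff.mpr basisFamily_mem_S3)
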